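/- arXiv:math/0702744 — 5 statements merged into one kernel-verified Lean document; each statement's English description precedes it below -/
import Mathlib

section
/- If the operator norm ‖·‖ is induced by a vector norm that is invariant under permutations of coordinates, then the norm of the n×n all-ones matrix J equals n. -/
open Matrix

/-- A family of vector norms on `ℝ^n` for every `n`. -/
structure VecNorm where
  V : ∀ {n : ℕ}, (Fin n → ℝ) → ℝ
  eq_zero_iff : ∀ {n : ℕ} (x : Fin n → ℝ), V x = 0 ↔ x = 0
  smul : ∀ {n : ℕ} (c : ℝ) (x : Fin n → ℝ), V (c • x) = |c| * V x
  add_le : ∀ {n : ℕ} (x y : Fin n → ℝ), V (x + y) ≤ V x + V y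

/-- The operator norm induced by a family of vector norms. -/
noncomputable def opNorm (𝒱 : VecNorm) {m n : ℕ} (R : Matrix (Fin m) (Fin n) ℝ) : ℝ :=
  sSup ((fun x => 𝒱.V (R *ᵥ x) / 𝒱.V x) '' {x | x ≠ 0})

lemma vecNorm_zero (𝒱 : VecNorm) {n : ℕ} : 𝒱.V (0 : Fin n → ℝ) = 0 :=
  (𝒱.eq_zero_iff 0).2 rfl

lemma vecNorm_nonneg (𝒱 : VecNorm) {n : ℕ} (x : Fin n → ℝ) : 0 ≤ 𝒱.V x := by
  have hneg : 𝒱.V (-x) = 𝒱.V x := by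
    have := 𝒱.smul (-1) x
    simpa using this
  have h := 𝒱.add_le x (-x)
  rw [add_neg_cancel, vecNorm_zero, hneg] at h
  linarith

lemma vecNorm_pos (𝒱 : VecNorm) {n : ℕ} {x : Fin n → ℝ} (hx : x ≠ 0) : 0 < 𝒱.V x :=
  lt_of_le_of_ne (vecNorm_nonneg 𝒱 x) (fun h => hx ((𝒱.eq_zero_iff x).1 h.symm))

lemma vecNorm_sum_le (𝒱 : VecNorm) {n : ℕ} {ι : Type*} (s : Finset ι) (f : ι → Fin n → ℝ) :
    𝒱.V (∑ i ∈ s, f i) ≤ ∑ i ∈ s, 𝒱.V (f i) := by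
  induction s using Finset.cons_induction with
  | empty => simp [vecNorm_zero]
  | cons a s ha ih =>
    rw [Finset.sum_cons, Finset.sum_cons]
    exact le_trans (𝒱.add_le _ _) (by linarith)

/-- If the inducing vector norm is invariant under coordinate permutations,
then the operator norm of the `n×n` all-ones matrix equals `n`. -/
theorem opNorm_allOnes_of_symm (𝒱 : VecNorm) (n : ℕ)
    (hsym : ∀ (σ : Equiv.Perm (Fin n)) (x : Fin n → ℝ), 𝒱.V (x ∘ σ) = 𝒱.V x) :
    opNorm 𝒱 (Matrix.of fun (_ : Fin n) (_ : Fin n) => (1 : ℝ)) = n := by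
  rcases Nat.eq_zero_or_pos n with hn | hn
  · subst hn
    have h0 : {x : Fin 0 → ℝ | x ≠ 0} = ∅ := by
      ext x
      simp [Subsingleton.elim x 0]
    rw [opNorm, h0, Set.image_empty, Real.sSup_empty]
    simp
  haveI : NeZero n := ⟨hn.ne'⟩
  set J : Matrix (Fin n) (Fin n) ℝ := Matrix.of fun _ _ => (1 : ℝ) with hJ
  set one : Fin n → ℝ := fun _ => 1 with hone
  have hone_ne : one ≠ 0 := by
    intro h
    have := congrFun h ⟨0, hn⟩
    simp [hone] at this
  have hmul : ∀ x : Fin n → ℝ, J *ᵥ x = (∑ j, x j) • one := by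
    intro x
    ext i
    simp [hJ, hone, mulVec, dotProduct]
  -- key bound via cyclic shifts
  have key : ∀ x : Fin n → ℝ, 𝒱.V ((∑ j, x j) • one) ≤ n * 𝒱.V x := by
    intro x
    have h1 : (∑ k : Fin n, x ∘ ⇑(Equiv.addRight k)) = (∑ j, x j) • one := by
      ext j
      simp only [Finset.sum_apply, Function.comp_apply, Equiv.coe_addRight,
        Pi.smul_apply, smul_eq_mul, hone, mul_one]
      exact Fintype.sum_equiv (Equiv.addLeft j) _ _ (fun k => rfl)
    calc 𝒱.V ((∑ j, x j) • one) = 𝒱.V (∑ k : Fin n, x ∘ ⇑(Equiv.addRight k)) := by rw [h1]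
      _ ≤ ∑ k : Fin n, 𝒱.V (x ∘ ⇑(Equiv.addRight k)) := vecNorm_sum_le 𝒱 _ _
      _ = ∑ k : Fin n, 𝒱.V x := by
          refine Finset.sum_congr rfl fun k _ => hsym (Equiv.addRight k) x
      _ = n * 𝒱.V x := by simp [Finset.sum_const, mul_comm]
  have hVone_pos : 0 < 𝒱.V one := vecNorm_pos 𝒱 hone_ne
  set s := ((fun x => 𝒱.V (J *ᵥ x) / 𝒱.V x) '' {x | x ≠ 0}) with hs
  have hmem : (n : ℝ) ∈ s := by
    refine ⟨one, hone_ne, ?_⟩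
    show 𝒱.V (J *ᵥ one) / 𝒱.V one = (n : ℝ)
    rw [hmul]
    have hsum : (∑ j : Fin n, one j) = (n : ℝ) := by simp [hone]
    rw [hsum, 𝒱.smul]
    rw [abs_of_nonneg (by positivity)]
    field_simp
  have hub : ∀ y ∈ s, y ≤ (n : ℝ) := by
    rintro y ⟨x, hx, rfl⟩
    have hxpos : 0 < 𝒱.V x := vecNorm_pos 𝒱 hx
    show 𝒱.V (J *ᵥ x) / 𝒱.V x ≤ (n : ℝ)
    rw [hmul]
    rw [div_le_iff₀ hxpos]
    exact key x
  have hgoal : opNorm 𝒱 J = sSup s := rfl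
  rw [hgoal]
  exact le_antisymm (Real.sSup_le hub (by positivity))
    (le_csSup ⟨(n : ℝ), hub⟩ hmem)
end

section
/- Let R be an n×n nonnegative matrix and ‖·‖ a matrix norm with ‖R‖ ≤ μ < 1, and let J_n = ‖J‖ where J is the all-ones matrix. Then for any 0 < η < 1 − μ, setting R' = R + (η/J_n)J, there exists a row vector w > 0 with ‖w‖_∞ = 1, wR' ≤ (μ+η)w componentwise, and min_i w_i ≥ η/J_n. -/
open Matrix

/-!
Instead of a Perron vector of `R'` we use `w = 𝟙ᵀ (λ - R)⁻¹` with `λ = μ + η`, i.e. the Neumann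
series `∑ₖ 𝟙ᵀ Rᵏ / λᵏ⁺¹`. It converges because `J Rᵏ J = (∑ᵢⱼ (Rᵏ)ᵢⱼ) J` bounds the entry sum of
`Rᵏ` by `‖J Rᵏ‖ ≤ ‖J‖ μᵏ`, and the same bound gives `∑ w ≤ ‖J‖ / η`. Since `w R = λ w - 𝟙ᵀ`,
we get `w R' = λ w - 𝟙ᵀ + (η / ‖J‖)(∑ w) 𝟙ᵀ ≤ λ w`. After scaling to `max w = 1`, the lower
bound follows from `η / ‖J‖ ≤ (η / ‖J‖) ∑ w ≤ (w R')ⱼ ≤ λ wⱼ ≤ wⱼ`.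
-/

/-- A (submultiplicative) matrix norm: a family of functions on real matrices of
all sizes satisfying positive definiteness, absolute homogeneity, the triangle
inequality and submultiplicativity. -/
structure MatrixNorm where
  N : ∀ {m n : ℕ}, Matrix (Fin m) (Fin n) ℝ → ℝ
  eq_zero_iff : ∀ {m n : ℕ} (R : Matrix (Fin m) (Fin n) ℝ), N R = 0 ↔ R = 0
  smul : ∀ {m n : ℕ} (c : ℝ) (R : Matrix (Fin m) (Fin n) ℝ), N (c • R) = |c| * N R
  add_le : ∀ {m n : ℕ} (R S : Matrix (Fin m) (Fin n) ℝ), N (R + S) ≤ N R + N S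
  mul_le : ∀ {m n k : ℕ} (R : Matrix (Fin m) (Fin k) ℝ) (S : Matrix (Fin k) (Fin n) ℝ),
      N (R * S) ≤ N R * N S

/-- The `n×n` all-ones matrix. -/
def allOnes (n : ℕ) : Matrix (Fin n) (Fin n) ℝ := Matrix.of fun _ _ => 1

lemma allOnes_mul_mul_allOnes {n : ℕ} (A : Matrix (Fin n) (Fin n) ℝ) :
    allOnes n * A * allOnes n = (∑ i, ∑ j, A i j) • allOnes n := by
  ext a b
  simp [allOnes, Matrix.mul_apply, Finset.sum_comm (γ := Fin n)]

namespace MatrixNorm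

variable (𝒩 : MatrixNorm)

lemma N_nonneg {m n : ℕ} (A : Matrix (Fin m) (Fin n) ℝ) : 0 ≤ 𝒩.N A := by
  have h := 𝒩.add_le A ((-1 : ℝ) • A)
  rw [𝒩.smul, neg_one_smul, add_neg_cancel, (𝒩.eq_zero_iff 0).2 rfl] at h
  norm_num at h
  linarith

lemma N_mul_pow_le {m n : ℕ} (A : Matrix (Fin m) (Fin n) ℝ) (B : Matrix (Fin n) (Fin n) ℝ)
    (k : ℕ) : 𝒩.N (A * B ^ k) ≤ 𝒩.N A * 𝒩.N B ^ k := by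
  induction k with
  | zero => simp
  | succ k ih =>
    calc 𝒩.N (A * B ^ (k + 1)) = 𝒩.N (A * B ^ k * B) := by rw [pow_succ, Matrix.mul_assoc]
      _ ≤ 𝒩.N (A * B ^ k) * 𝒩.N B := 𝒩.mul_le _ _
      _ ≤ 𝒩.N A * 𝒩.N B ^ k * 𝒩.N B := by gcongr; exact 𝒩.N_nonneg B
      _ = 𝒩.N A * 𝒩.N B ^ (k + 1) := by ring

lemma N_allOnes_pos {n : ℕ} [NeZero n] : 0 < 𝒩.N (allOnes n) := by
  refine (𝒩.N_nonneg _).lt_of_ne fun h => ?_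
  have := congrFun₂ ((𝒩.eq_zero_iff _).1 h.symm) 0 0
  simp [allOnes] at this

lemma sum_le_N_allOnes_mul {n : ℕ} (A : Matrix (Fin n) (Fin n) ℝ) :
    ∑ i, ∑ j, A i j ≤ 𝒩.N (allOnes n * A) := by
  cases n with
  | zero => simpa using 𝒩.N_nonneg _
  | succ n =>
    have h := 𝒩.mul_le (allOnes (n + 1) * A) (allOnes (n + 1))
    rw [allOnes_mul_mul_allOnes, 𝒩.smul] at h
    exact (le_abs_self _).trans (le_of_mul_le_mul_right h 𝒩.N_allOnes_pos)

end MatrixNorm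

lemma one_vecMul_apply {n : ℕ} (A : Matrix (Fin n) (Fin n) ℝ) (j : Fin n) :
    ((1 : Fin n → ℝ) ᵥ* A) j = ∑ i, A i j := by
  simp [vecMul, dotProduct]

lemma vecMul_allOnes_apply {n : ℕ} (w : Fin n → ℝ) (j : Fin n) :
    (w ᵥ* allOnes n) j = ∑ i, w i := by
  simp [vecMul, dotProduct, allOnes]

lemma mul_sum_le_vecMul_apply {n : ℕ} {B : Matrix (Fin n) (Fin n) ℝ} {w : Fin n → ℝ} {c : ℝ}
    {j : Fin n} (hw : ∀ i, 0 ≤ w i) (hB : ∀ i, c ≤ B i j) : c * ∑ i, w i ≤ (w ᵥ* B) j := by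
  simp only [vecMul, dotProduct, Finset.mul_sum]
  exact Finset.sum_le_sum fun i _ => by rw [mul_comm]; exact mul_le_mul_of_nonneg_left (hB i) (hw i)

lemma iSup_inv_iSup_smul_self {ι : Type*} [Finite ι] (v : ι → ℝ) (hv : 0 < ⨆ i, v i) :
    ⨆ i, ((⨆ i, v i)⁻¹ • v) i = 1 := by
  simp only [Pi.smul_apply, smul_eq_mul, ← Real.mul_iSup_of_nonneg (inv_nonneg.2 hv.le)]
  exact inv_mul_cancel₀ hv.ne'

section ResolventRow

variable {n : ℕ} (R : Matrix (Fin n) (Fin n) ℝ) (lam : ℝ)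

/-- The row vector `𝟙ᵀ (λ - R)⁻¹`, as its Neumann series `∑ₖ 𝟙ᵀ Rᵏ / λᵏ⁺¹`. -/
noncomputable def resolventRow : Fin n → ℝ :=
  ∑' k : ℕ, (lam ^ (k + 1))⁻¹ • ((1 : Fin n → ℝ) ᵥ* R ^ k)

variable {R lam} (𝒩 : MatrixNorm) {μ : ℝ}

lemma one_vecMul_pow_apply_nonneg (hR : ∀ i j, 0 ≤ R i j) (k : ℕ) (j : Fin n) :
    0 ≤ ((1 : Fin n → ℝ) ᵥ* R ^ k) j := by
  rw [one_vecMul_apply]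
  exact Finset.sum_nonneg fun i _ => pow_apply_nonneg hR k i j

lemma sum_one_vecMul_pow_le (hRμ : 𝒩.N R ≤ μ) (k : ℕ) :
    ∑ j, ((1 : Fin n → ℝ) ᵥ* R ^ k) j ≤ 𝒩.N (allOnes n) * μ ^ k := by
  simp only [one_vecMul_apply]
  rw [Finset.sum_comm]
  calc ∑ i, ∑ j, (R ^ k) i j ≤ 𝒩.N (allOnes n * R ^ k) := 𝒩.sum_le_N_allOnes_mul _
    _ ≤ 𝒩.N (allOnes n) * 𝒩.N R ^ k := 𝒩.N_mul_pow_le _ _ k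
    _ ≤ 𝒩.N (allOnes n) * μ ^ k := by gcongr <;> apply 𝒩.N_nonneg

lemma sum_resolventRow_term_le (hRμ : 𝒩.N R ≤ μ) (hlam : 0 < lam) (k : ℕ) :
    ∑ j, ((lam ^ (k + 1))⁻¹ • ((1 : Fin n → ℝ) ᵥ* R ^ k)) j ≤
      𝒩.N (allOnes n) / lam * (μ / lam) ^ k := by
  simp only [Pi.smul_apply, smul_eq_mul, ← Finset.mul_sum]
  calc (lam ^ (k + 1))⁻¹ * ∑ j, ((1 : Fin n → ℝ) ᵥ* R ^ k) j
      ≤ (lam ^ (k + 1))⁻¹ * (𝒩.N (allOnes n) * μ ^ k) := by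
        gcongr
        exact sum_one_vecMul_pow_le 𝒩 hRμ k
    _ = 𝒩.N (allOnes n) / lam * (μ / lam) ^ k := by rw [div_pow, pow_succ]; field_simp

lemma hasSum_resolventRow (hR : ∀ i j, 0 ≤ R i j) (hRμ : 𝒩.N R ≤ μ) (hlam : μ < lam) :
    HasSum (fun k : ℕ => (lam ^ (k + 1))⁻¹ • ((1 : Fin n → ℝ) ᵥ* R ^ k)) (resolventRow R lam) := by
  have hμ : 0 ≤ μ := (𝒩.N_nonneg R).trans hRμ
  have hlam0 : 0 < lam := hμ.trans_lt hlam
  have hterm : ∀ k j, 0 ≤ ((lam ^ (k + 1))⁻¹ • ((1 : Fin n → ℝ) ᵥ* R ^ k)) j := fun k j =>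
    mul_nonneg (by positivity) (one_vecMul_pow_apply_nonneg hR k j)
  refine Summable.hasSum <| Pi.summable.2 fun j => ?_
  refine Summable.of_nonneg_of_le (hterm · j) (fun k => ?_)
    ((summable_geometric_of_lt_one (by positivity) ((div_lt_one hlam0).2 hlam)).mul_left
      (𝒩.N (allOnes n) / lam))
  exact (Finset.single_le_sum (fun i _ => hterm k i) (Finset.mem_univ j)).trans
    (sum_resolventRow_term_le 𝒩 hRμ hlam0 k)

lemma resolventRow_vecMul (hR : ∀ i j, 0 ≤ R i j) (hRμ : 𝒩.N R ≤ μ) (hlam : μ < lam) :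
    resolventRow R lam ᵥ* R = lam • resolventRow R lam - 1 := by
  have hlam0 : 0 < lam := ((𝒩.N_nonneg R).trans hRμ).trans_lt hlam
  set t : ℕ → Fin n → ℝ := fun k => (lam ^ (k + 1))⁻¹ • ((1 : Fin n → ℝ) ᵥ* R ^ k)
  have h := hasSum_resolventRow 𝒩 hR hRμ hlam
  have hshift : HasSum (fun k => lam • t (k + 1)) (lam • (resolventRow R lam - t 0)) := by
    have := (hasSum_nat_add_iff' 1).2 h
    rw [Finset.sum_range_one] at this
    exact this.const_smul lam
  have hmap : HasSum (fun k => t k ᵥ* R) (resolventRow R lam ᵥ* R) :=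
    h.map (vecMulLinear R) (LinearMap.continuous_of_finiteDimensional _)
  have hterm : (fun k => t k ᵥ* R) = fun k => lam • t (k + 1) := by
    funext k
    simp only [t, smul_vecMul, vecMul_vecMul, ← pow_succ, smul_smul]
    congr 1
    field_simp
    ring
  rw [hmap.unique (hterm ▸ hshift)]
  simp [t, smul_sub, hlam0.ne']

lemma inv_le_resolventRow (hR : ∀ i j, 0 ≤ R i j) (hRμ : 𝒩.N R ≤ μ) (hlam : μ < lam)
    (j : Fin n) : lam⁻¹ ≤ resolventRow R lam j := by
  have hlam0 : 0 < lam := ((𝒩.N_nonneg R).trans hRμ).trans_lt hlam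
  have h := le_hasSum (Pi.hasSum.1 (hasSum_resolventRow 𝒩 hR hRμ hlam) j) 0
    fun k _ => mul_nonneg (by positivity) (one_vecMul_pow_apply_nonneg hR k j)
  simpa [one_vecMul_apply] using h

lemma sum_resolventRow_le (hR : ∀ i j, 0 ≤ R i j) (hRμ : 𝒩.N R ≤ μ) (hlam : μ < lam) :
    ∑ j, resolventRow R lam j ≤ 𝒩.N (allOnes n) / (lam - μ) := by
  have hμ : 0 ≤ μ := (𝒩.N_nonneg R).trans hRμ
  have hlam0 : 0 < lam := hμ.trans_lt hlam
  have hsum := hasSum_sum (s := Finset.univ) fun j _ =>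
    Pi.hasSum.1 (hasSum_resolventRow 𝒩 hR hRμ hlam) j
  have hgeom := (hasSum_geometric_of_lt_one (div_nonneg hμ hlam0.le)
    ((div_lt_one hlam0).2 hlam)).mul_left (𝒩.N (allOnes n) / lam)
  refine (hasSum_le (sum_resolventRow_term_le 𝒩 hRμ hlam0) hsum hgeom).trans_eq ?_
  field_simp

end ResolventRow

theorem exists_pos_vecMul_add_smul_allOnes_le {n : ℕ} [NeZero n] (𝒩 : MatrixNorm)
    {R : Matrix (Fin n) (Fin n) ℝ} (hR : ∀ i j, 0 ≤ R i j) {μ η : ℝ} (hRμ : 𝒩.N R ≤ μ)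
    (hη : 0 < η) :
    ∃ w : Fin n → ℝ, (∀ i, 0 < w i) ∧
      ∀ j, (w ᵥ* (R + (η / 𝒩.N (allOnes n)) • allOnes n)) j ≤ (μ + η) * w j := by
  have hlam : μ < μ + η := lt_add_of_pos_right μ hη
  have hJ := 𝒩.N_allOnes_pos (n := n)
  set w := resolventRow R (μ + η)
  have hlam0 : 0 < μ + η := ((𝒩.N_nonneg R).trans hRμ).trans_lt hlam
  refine ⟨w, fun i => (inv_pos.2 hlam0).trans_le (inv_le_resolventRow 𝒩 hR hRμ hlam i),
    fun j => ?_⟩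
  have hsum : η / 𝒩.N (allOnes n) * ∑ i, w i ≤ 1 := by
    calc η / 𝒩.N (allOnes n) * ∑ i, w i ≤ η / 𝒩.N (allOnes n) * (𝒩.N (allOnes n) / η) := by
          gcongr
          simpa using sum_resolventRow_le 𝒩 hR hRμ hlam
      _ = 1 := by field_simp
  rw [vecMul_add, vecMul_smul, resolventRow_vecMul 𝒩 hR hRμ hlam]
  simp only [Pi.add_apply, Pi.sub_apply, Pi.smul_apply, smul_eq_mul, vecMul_allOnes_apply,
    Pi.one_apply]
  linarith

theorem perturbed_perron_vector_general {n : ℕ} [NeZero n] (𝒩 : MatrixNorm)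
    (R : Matrix (Fin n) (Fin n) ℝ) (hR : ∀ i j, 0 ≤ R i j)
    (μ η : ℝ) (hRμ : 𝒩.N R ≤ μ) (hη : 0 < η) (hη' : η < 1 - μ) :
    ∃ w : Fin n → ℝ, (∀ i, 0 < w i) ∧ (⨆ i, w i) = 1 ∧
      (∀ j, (w ᵥ* (R + (η / 𝒩.N (allOnes n)) • allOnes n)) j ≤ (μ + η) * w j) ∧
      (∀ i, η / 𝒩.N (allOnes n) ≤ w i) := by
  obtain ⟨v, hv_pos, hv⟩ := exists_pos_vecMul_add_smul_allOnes_le 𝒩 hR hRμ hη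
  set c := η / 𝒩.N (allOnes n)
  set R' := R + c • allOnes n
  set M := ⨆ i, v i
  have hM : 0 < M := (hv_pos 0).trans_le (le_ciSup (Finite.bddAbove_range v) 0)
  set w := M⁻¹ • v
  have hw_pos : ∀ i, 0 < w i := fun i => mul_pos (inv_pos.2 hM) (hv_pos i)
  have hw : ∀ j, (w ᵥ* R') j ≤ (μ + η) * w j := fun j => by
    simp only [w, smul_vecMul, Pi.smul_apply, smul_eq_mul, mul_left_comm _ M⁻¹]
    exact mul_le_mul_of_nonneg_left (hv j) (inv_nonneg.2 hM.le)
  have hw_sup : ⨆ i, w i = 1 := iSup_inv_iSup_smul_self v hM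
  refine ⟨w, hw_pos, hw_sup, hw, fun j => ?_⟩
  have hsum : 1 ≤ ∑ i, w i := hw_sup ▸ ciSup_le fun i =>
    Finset.single_le_sum (fun k _ => (hw_pos k).le) (Finset.mem_univ i)
  have hR' : ∀ i, c ≤ R' i j := fun i => by simpa [R', allOnes] using hR i j
  calc c ≤ c * ∑ i, w i := le_mul_of_one_le_right (div_pos hη 𝒩.N_allOnes_pos).le hsum
    _ ≤ (w ᵥ* R') j := mul_sum_le_vecMul_apply (fun i => (hw_pos i).le) hR'
    _ ≤ (μ + η) * w j := hw j
    _ ≤ w j := mul_le_of_le_one_left (hw_pos j).le (by linarith)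

/-- Let `R` be nonnegative with `‖R‖ ≤ μ < 1` for a matrix norm `‖·‖`, and let
`J_n = ‖J‖`. For any `0 < η < 1 - μ`, setting `R' = R + (η/J_n)J`, there is a
row vector `w > 0` with `‖w‖_∞ = 1`, `wR' ≤ (μ+η)w` componentwise, and
`min_i w_i ≥ η/J_n`. -/
theorem perturbed_perron_vector {n : ℕ} [NeZero n] (𝒩 : MatrixNorm)
    (R : Matrix (Fin n) (Fin n) ℝ) (hR : ∀ i j, 0 ≤ R i j)
    (μ η : ℝ) (hRμ : 𝒩.N R ≤ μ) (hμ : μ < 1) (hη : 0 < η) (hη' : η < 1 - μ) :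
    ∃ w : Fin n → ℝ, (∀ i, 0 < w i) ∧ (⨆ i, w i) = 1 ∧
      (∀ j, (w ᵥ* (R + (η / 𝒩.N (allOnes n)) • allOnes n)) j ≤ (μ + η) * w j) ∧
      (∀ i, η / 𝒩.N (allOnes n) ≤ w i) :=
  perturbed_perron_vector_general 𝒩 R hR μ η hRμ hη hη'
end

section
/- Let R be an n×n nonnegative matrix with entries ≤ 1, and for each j let R_j be the matrix equal to the identity except that its j-th column is the j-th column of R. If w > 0 is a row vector with wR ≤ μw componentwise for some μ ≤ 1, then w(R₁R₂⋯R_n) ≤ μw componentwise. -/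
/-!
Right multiplication by `R_j` changes only the `j`-th coordinate of a row vector `v`, which
becomes `(vR)_j`. So if `v ≤ w`, then `(vR)_j ≤ (wR)_j ≤ μ w_j` because `R ≥ 0`. Hence along the
sweep the running vector stays below `w`, and below `μ w_j` at every coordinate `j` already
swept (`μ w ≤ w` as `μ ≤ 1` and `w > 0`); after all `n` columns it is below `μ w`.
-/

open Matrix

/-- `colMat R j` is the identity matrix with column `j` replaced by column `j`
of `R`. -/
def colMat {n : ℕ} (R : Matrix (Fin n) (Fin n) ℝ) (j : Fin n) :
    Matrix (Fin n) (Fin n) ℝ :=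
  Matrix.of fun i k => if k = j then R i j else if i = k then 1 else 0

/-- The scan matrix `R⃗ = R₁ R₂ ⋯ Rₙ`. -/
def scanMat {n : ℕ} (R : Matrix (Fin n) (Fin n) ℝ) : Matrix (Fin n) (Fin n) ℝ :=
  ((List.finRange n).map (colMat R)).prod

lemma vecMul_colMat {n : ℕ} (R : Matrix (Fin n) (Fin n) ℝ) (v : Fin n → ℝ) (j : Fin n) :
    v ᵥ* colMat R j = Function.update v j ((v ᵥ* R) j) := by
  ext k
  rcases eq_or_ne k j with rfl | hkj
  · simp [colMat, vecMul, dotProduct]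
  · simp [colMat, vecMul, dotProduct, hkj, mul_ite]

section

variable {n : ℕ} {R : Matrix (Fin n) (Fin n) ℝ} {w : Fin n → ℝ} {μ : ℝ}

lemma vecMul_colMat_le_piecewise (hR : ∀ i j, 0 ≤ R i j) (hwR : w ᵥ* R ≤ μ • w)
    (hμw : μ • w ≤ w) {s : Finset (Fin n)} {u : Fin n → ℝ}
    (hu : u ≤ s.piecewise (μ • w) w) (a : Fin n) :
    u ᵥ* colMat R a ≤ (insert a s).piecewise (μ • w) w := by
  have huw : u ≤ w := hu.trans (s.piecewise_le_of_le_of_le hμw le_rfl)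
  rw [vecMul_colMat, Finset.piecewise_insert]
  refine update_le_update_iff.2 ⟨?_, fun j _ => hu j⟩
  calc (u ᵥ* R) a ≤ (w ᵥ* R) a :=
        dotProduct_le_dotProduct_of_nonneg_right huw fun i => hR i a
    _ ≤ (μ • w) a := hwR a

lemma vecMul_prod_map_colMat_le_piecewise (hR : ∀ i j, 0 ≤ R i j) (hwR : w ᵥ* R ≤ μ • w)
    (hμw : μ • w ≤ w) (L : List (Fin n)) {s : Finset (Fin n)} {u : Fin n → ℝ}
    (hu : u ≤ s.piecewise (μ • w) w) :
    u ᵥ* (L.map (colMat R)).prod ≤ (s ∪ L.toFinset).piecewise (μ • w) w := by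
  induction L generalizing s u with
  | nil =>
    rwa [List.map_nil, List.prod_nil, vecMul_one, List.toFinset_nil, Finset.union_empty]
  | cons a L ih =>
    rw [List.map_cons, List.prod_cons, ← vecMul_vecMul, List.toFinset_cons,
      Finset.union_insert, ← Finset.insert_union]
    exact ih (vecMul_colMat_le_piecewise hR hwR hμw hu a)

end

theorem vecMul_scanMat_le_general {n : ℕ} (R : Matrix (Fin n) (Fin n) ℝ)
    (hR : ∀ i j, 0 ≤ R i j)
    (w : Fin n → ℝ) (hw : ∀ i, 0 < w i) (μ : ℝ) (hμ : μ ≤ 1)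
    (hwR : ∀ j, (w ᵥ* R) j ≤ μ * w j) :
    ∀ j, (w ᵥ* scanMat R) j ≤ μ * w j := by
  have hμw : μ • w ≤ w := fun j => mul_le_of_le_one_left (hw j).le hμ
  have h := vecMul_prod_map_colMat_le_piecewise hR hwR hμw (List.finRange n) (s := ∅)
    (u := w) (Finset.piecewise_empty _ _).ge
  rwa [Finset.empty_union, List.toFinset_finRange, Finset.piecewise_univ] at h

/-- If `R` is nonnegative with entries at most `1` and `w > 0` is a row vector
with `wR ≤ μw` componentwise for some `μ ≤ 1`, then `w(R₁R₂⋯Rₙ) ≤ μw`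
componentwise. -/
theorem vecMul_scanMat_le {n : ℕ} (R : Matrix (Fin n) (Fin n) ℝ)
    (hR : ∀ i j, 0 ≤ R i j) (hR1 : ∀ i j, R i j ≤ 1)
    (w : Fin n → ℝ) (hw : ∀ i, 0 < w i) (μ : ℝ) (hμ : μ ≤ 1)
    (hwR : ∀ j, (w ᵥ* R) j ≤ μ * w j) :
    ∀ j, (w ᵥ* scanMat R) j ≤ μ * w j :=
  vecMul_scanMat_le_general R hR w hw μ hμ hwR
end

section
/- Let R be a symmetric nonnegative n×n matrix with zero diagonal and λ(R) = λ < 1. For 0 ≤ σ ≤ 1, let R^σ be R with its strict upper triangle multiplied by σ. If σ = λ/(2−λ), then λ(R^σ) ≤ σ. -/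
open Matrix

/-- The spectral radius of a real square matrix: the supremum of the absolute
values of its (complex) eigenvalues, i.e. of the roots of its characteristic
polynomial over `ℂ`. -/
noncomputable def specRad {n : ℕ} (R : Matrix (Fin n) (Fin n) ℝ) : ℝ :=
  sSup {r : ℝ | ∃ μ : ℂ, ((R.map (fun a => (a : ℂ))).charpoly).IsRoot μ ∧ r = ‖μ‖}

/-- `upperScale R σ` is `R` with its strict upper triangle multiplied by `σ`. -/
def upperScale {n : ℕ} (R : Matrix (Fin n) (Fin n) ℝ) (σ : ℝ) :
    Matrix (Fin n) (Fin n) ℝ :=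
  Matrix.of fun i j => if i < j then σ * R i j else R i j

/-! If `A *ᵥ x = μ • x` with `A` entrywise nonnegative, the triangle inequality gives
`‖μ‖ |x| ≤ A |x|` entrywise, so `‖μ‖ ≤ yᵀ A y / yᵀ y` for `y = |x|`. For `A = R^σ` this quadratic
form only sees the symmetric part `(A + Aᵀ) / 2 = ((1 + σ) / 2) R`, whose Rayleigh quotient is at
most `(1 + σ) λ / 2`; and `σ = λ / (2 - λ)` is precisely the solution of `(1 + σ) λ / 2 = σ`. -/

namespace Matrix

variable {n : Type*} [Fintype n]

theorem norm_mul_norm_le_mulVec_norm {A : Matrix n n ℝ} (hA : ∀ i j, 0 ≤ A i j) {μ : ℂ}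
    {x : n → ℂ} (h : A.map (↑) *ᵥ x = μ • x) (i : n) :
    ‖μ‖ * ‖x i‖ ≤ (A *ᵥ fun j => ‖x j‖) i := by
  calc ‖μ‖ * ‖x i‖ = ‖∑ j, (A i j : ℂ) * x j‖ := by
        rw [← norm_mul, ← smul_eq_mul, ← Pi.smul_apply, ← h]; rfl
    _ ≤ ∑ j, ‖(A i j : ℂ) * x j‖ := norm_sum_le _ _
    _ = (A *ᵥ fun j => ‖x j‖) i := by
        simp only [norm_mul, Complex.norm_real, Real.norm_of_nonneg (hA i _)]; rfl

variable [DecidableEq n]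

theorem exists_mulVec_eq_smul_of_isRoot_charpoly {K : Type*} [Field K] {A : Matrix n n K} {μ : K}
    (h : A.charpoly.IsRoot μ) : ∃ x, x ≠ 0 ∧ A *ᵥ x = μ • x := by
  rw [← mem_spectrum_iff_isRoot_charpoly, ← spectrum_toLin',
    ← Module.End.hasEigenvalue_iff_mem_spectrum] at h
  obtain ⟨x, hx⟩ := h.exists_hasEigenvector
  exact ⟨x, hx.2, Module.End.mem_eigenspace_iff.1 hx.1⟩

theorem IsHermitian.dotProduct_mulVec_le {A : Matrix n n ℝ} (hA : A.IsHermitian) {c : ℝ}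
    (hc : ∀ i, hA.eigenvalues i ≤ c) (y : n → ℝ) : y ⬝ᵥ A *ᵥ y ≤ c * (y ⬝ᵥ y) := by
  set U : Matrix n n ℝ := ↑hA.eigenvectorUnitary
  have hUt : star U = Uᵀ := conjTranspose_eq_transpose_of_trivial U
  set z := y ᵥ* U
  have hz : star U *ᵥ y = z := by rw [hUt, mulVec_transpose]
  have hzz : z ⬝ᵥ z = y ⬝ᵥ y := by
    rw [← dotProduct_mulVec, ← hz, mulVec_mulVec,
      Unitary.mul_star_self_of_mem hA.eigenvectorUnitary.2, one_mulVec]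
  have hquad : y ⬝ᵥ A *ᵥ y = ∑ i, hA.eigenvalues i * z i ^ 2 := by
    conv_lhs => rw [hA.spectral_theorem, Unitary.conjStarAlgAut_apply]
    rw [← mulVec_mulVec, ← mulVec_mulVec, dotProduct_mulVec, hz]
    simp only [dotProduct, mulVec_diagonal, Function.comp_apply, RCLike.ofReal_real_eq_id, id]
    exact Finset.sum_congr rfl fun i _ => by ring
  rw [hquad, ← hzz, dotProduct, Finset.mul_sum]
  exact Finset.sum_le_sum fun i _ => by
    rw [← sq]
    exact mul_le_mul_of_nonneg_right (hc i) (sq_nonneg _)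

end Matrix

theorem norm_le_specRad_of_isRoot {n : ℕ} (A : Matrix (Fin n) (Fin n) ℝ) {μ : ℂ}
    (h : (A.map (↑)).charpoly.IsRoot μ) : ‖μ‖ ≤ specRad A := by
  have hroots :=
    Polynomial.finite_setOfPred_isRoot (charpoly_monic (A.map ((↑) : ℝ → ℂ))).ne_zero
  refine le_csSup ((hroots.image (‖·‖)).bddAbove.mono ?_) ⟨μ, h, rfl⟩
  rintro _ ⟨ν, hν, rfl⟩
  exact ⟨ν, hν, rfl⟩

theorem specRad_le_of_forall_isRoot {n : ℕ} (A : Matrix (Fin n) (Fin n) ℝ) {c : ℝ} (hc : 0 ≤ c)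
    (h : ∀ μ : ℂ, (A.map (↑)).charpoly.IsRoot μ → ‖μ‖ ≤ c) : specRad A ≤ c :=
  Real.sSup_le (by rintro _ ⟨μ, hμ, rfl⟩; exact h μ hμ) hc

theorem Matrix.IsHermitian.eigenvalues_le_specRad {n : ℕ} {A : Matrix (Fin n) (Fin n) ℝ}
    (hA : A.IsHermitian) (i : Fin n) : hA.eigenvalues i ≤ specRad A := by
  have hroot : A.charpoly.IsRoot (hA.eigenvalues i) :=
    mem_spectrum_iff_isRoot_charpoly.1 (hA.eigenvalues_mem_spectrum_real i)
  have hrootℂ := hroot.map (f := Complex.ofRealHom)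
  rw [← charpoly_map] at hrootℂ
  calc hA.eigenvalues i ≤ ‖(hA.eigenvalues i : ℂ)‖ := by
        rw [Complex.norm_real]; exact Real.le_norm_self _
    _ ≤ specRad A := norm_le_specRad_of_isRoot A hrootℂ

theorem Matrix.IsSymm.dotProduct_mulVec_le_specRad {n : ℕ} {A : Matrix (Fin n) (Fin n) ℝ}
    (hA : A.IsSymm) (y : Fin n → ℝ) : y ⬝ᵥ A *ᵥ y ≤ specRad A * (y ⬝ᵥ y) :=
  have hH : A.IsHermitian := by rwa [IsHermitian, conjTranspose_eq_transpose_of_trivial]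
  hH.dotProduct_mulVec_le hH.eigenvalues_le_specRad y

theorem specRad_nonneg {n : ℕ} (A : Matrix (Fin n) (Fin n) ℝ) : 0 ≤ specRad A :=
  Real.sSup_nonneg (by rintro _ ⟨μ, -, rfl⟩; exact norm_nonneg μ)

theorem specRad_le_of_dotProduct_mulVec_le {n : ℕ} {A : Matrix (Fin n) (Fin n) ℝ}
    (hA : ∀ i j, 0 ≤ A i j) {c : ℝ} (hc : 0 ≤ c)
    (hquad : ∀ y : Fin n → ℝ, 0 ≤ y → y ⬝ᵥ A *ᵥ y ≤ c * (y ⬝ᵥ y)) : specRad A ≤ c := by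
  refine specRad_le_of_forall_isRoot A hc fun μ hμ => ?_
  obtain ⟨x, hx0, hx⟩ := exists_mulVec_eq_smul_of_isRoot_charpoly hμ
  set y : Fin n → ℝ := fun i => ‖x i‖
  have hy0 : 0 ≤ y := fun i => norm_nonneg (x i)
  have hyy : 0 < y ⬝ᵥ y := by
    have hy : y ≠ 0 := fun h => hx0 (funext fun i => norm_eq_zero.1 (congrFun h i))
    exact (dotProduct_nonneg_of_nonneg hy0 hy0).lt_of_ne' (dotProduct_self_eq_zero.not.2 hy)
  have hμy : ‖μ‖ * (y ⬝ᵥ y) ≤ y ⬝ᵥ A *ᵥ y := by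
    rw [← smul_eq_mul, ← dotProduct_smul]
    exact dotProduct_le_dotProduct_of_nonneg_left (norm_mul_norm_le_mulVec_norm hA hx) hy0
  exact le_of_mul_le_mul_right (hμy.trans (hquad y hy0)) hyy

theorem upperScale_nonneg {n : ℕ} {R : Matrix (Fin n) (Fin n) ℝ} (hR : ∀ i j, 0 ≤ R i j)
    {σ : ℝ} (hσ : 0 ≤ σ) (i j : Fin n) : 0 ≤ upperScale R σ i j := by
  simp only [upperScale, of_apply]
  split_ifs
  · exact mul_nonneg hσ (hR i j)
  · exact hR i j

theorem upperScale_add_transpose {n : ℕ} {R : Matrix (Fin n) (Fin n) ℝ} (hsymm : R.IsSymm)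
    (hdiag : ∀ i, R i i = 0) (σ : ℝ) : upperScale R σ + (upperScale R σ)ᵀ = (1 + σ) • R := by
  ext i j
  have hji : R j i = R i j := hsymm.apply i j
  rcases lt_trichotomy i j with h | rfl | h
  · simp [upperScale, h, h.not_gt, hji]; ring
  · simp [upperScale, hdiag]
  · simp [upperScale, h, h.not_gt, hji]; ring

theorem dotProduct_mulVec_upperScale {n : ℕ} {R : Matrix (Fin n) (Fin n) ℝ} (hsymm : R.IsSymm)
    (hdiag : ∀ i, R i i = 0) (σ : ℝ) (y : Fin n → ℝ) :
    y ⬝ᵥ upperScale R σ *ᵥ y = (1 + σ) / 2 * (y ⬝ᵥ R *ᵥ y) := by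
  have h := congrArg (fun M => y ⬝ᵥ M *ᵥ y) (upperScale_add_transpose hsymm hdiag σ)
  simp only [add_mulVec, dotProduct_add, dotProduct_transpose_mulVec, smul_mulVec,
    dotProduct_smul, smul_eq_mul] at h
  linarith

/-- Let `R` be symmetric nonnegative with zero diagonal and `λ(R) = λ < 1`.
If `σ = λ/(2-λ)` then `λ(R^σ) ≤ σ`. -/
theorem specRad_upperScale_le {n : ℕ} (R : Matrix (Fin n) (Fin n) ℝ)
    (hsymm : R.IsSymm) (hR : ∀ i j, 0 ≤ R i j) (hdiag : ∀ i, R i i = 0)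
    (hlt : specRad R < 1) :
    specRad (upperScale R (specRad R / (2 - specRad R)))
      ≤ specRad R / (2 - specRad R) := by
  set ρ := specRad R
  set σ := ρ / (2 - ρ)
  have hσ : 0 ≤ σ := div_nonneg (specRad_nonneg R) (by linarith)
  have hfix : (1 + σ) / 2 * ρ = σ := by
    have : 2 - ρ ≠ 0 := by linarith
    simp only [σ]; field_simp; ring
  refine specRad_le_of_dotProduct_mulVec_le (upperScale_nonneg hR hσ) hσ fun y _ => ?_
  calc y ⬝ᵥ upperScale R σ *ᵥ y = (1 + σ) / 2 * (y ⬝ᵥ R *ᵥ y) :=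
        dotProduct_mulVec_upperScale hsymm hdiag σ y
    _ ≤ (1 + σ) / 2 * (ρ * (y ⬝ᵥ y)) := by
        gcongr; exact hsymm.dotProduct_mulVec_le_specRad y
    _ = σ * (y ⬝ᵥ y) := by rw [← mul_assoc, hfix]
end

section
/- Let R be a symmetric nonnegative n×n matrix with maximum density κ and maximum column sum α = ‖R‖₁. If R = B + Bᵀ for some real matrix B, then ‖B‖₁ ≥ κ and ‖B‖_∞ ≥ α − ‖B‖₁. -/
open Matrix

/-- The maximum absolute column sum norm `‖·‖₁`. -/
noncomputable def norm1 {m n : ℕ} (B : Matrix (Fin m) (Fin n) ℝ) : ℝ :=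
  ⨆ j, ∑ i, |B i j|

/-- The maximum absolute row sum norm `‖·‖_∞`. -/
noncomputable def normInf {m n : ℕ} (B : Matrix (Fin m) (Fin n) ℝ) : ℝ :=
  ⨆ i, ∑ j, |B i j|

/-- The maximum density of a square matrix: the maximum over nonempty subsets
`I` of `(∑_{i,j ∈ I} R i j) / (2|I|)`. -/
noncomputable def maxDensity {n : ℕ} (R : Matrix (Fin n) (Fin n) ℝ) : ℝ :=
  ⨆ I : {I : Finset (Fin n) // I.Nonempty},
    (∑ i ∈ I.1, ∑ j ∈ I.1, R i j) / (2 * I.1.card)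

/-- Let `R` be symmetric nonnegative with maximum density `κ` and maximum
column sum `α = ‖R‖₁`. If `R = B + Bᵀ` then `‖B‖₁ ≥ κ` and
`‖B‖_∞ ≥ α - ‖B‖₁`. -/
theorem decomp_norm_lower_bounds {n : ℕ} (R B : Matrix (Fin n) (Fin n) ℝ)
    (hsymm : R.IsSymm) (hR : ∀ i j, 0 ≤ R i j) (hdecomp : R = B + Bᵀ) :
    maxDensity R ≤ norm1 B ∧ norm1 R - norm1 B ≤ normInf B := by
  have hRB : ∀ i j, R i j = B i j + B j i := by
    intro i j; rw [hdecomp]; simp [Matrix.transpose_apply]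
  rcases Nat.eq_zero_or_pos n with h0 | hn
  · subst h0
    haveI : IsEmpty {I : Finset (Fin 0) // I.Nonempty} := by
      constructor
      rintro ⟨I, hI⟩
      exact hI.ne_empty (Finset.eq_empty_of_isEmpty I)
    constructor
    · simp [maxDensity, norm1, Real.iSup_of_isEmpty]
    · simp [norm1, normInf, Real.iSup_of_isEmpty]
  haveI : Nonempty (Fin n) := ⟨⟨0, hn⟩⟩
  have hbdd1 : BddAbove (Set.range fun j => ∑ i, |B i j|) :=
    Set.Finite.bddAbove (Set.finite_range _)
  have hbddInf : BddAbove (Set.range fun i => ∑ j, |B i j|) :=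
    Set.Finite.bddAbove (Set.finite_range _)
  have hbddR : BddAbove (Set.range fun j => ∑ i, |R i j|) :=
    Set.Finite.bddAbove (Set.finite_range _)
  have hcol : ∀ j, ∑ i, |B i j| ≤ norm1 B := fun j => le_ciSup hbdd1 j
  have hrow : ∀ i, ∑ j, |B i j| ≤ normInf B := fun i => le_ciSup hbddInf i
  have hB0 : 0 ≤ norm1 B :=
    le_trans (Finset.sum_nonneg fun i _ => abs_nonneg _) (hcol (Classical.arbitrary _))
  constructor
  · haveI : Nonempty {I : Finset (Fin n) // I.Nonempty} :=
      ⟨⟨{⟨0, hn⟩}, Finset.singleton_nonempty _⟩⟩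
    apply ciSup_le
    rintro ⟨I, hI⟩
    have hcard : (0:ℝ) < I.card := by exact_mod_cast hI.card_pos
    rw [div_le_iff₀ (by positivity)]
    have hsum : ∑ i ∈ I, ∑ j ∈ I, R i j = 2 * ∑ j ∈ I, ∑ i ∈ I, B i j := by
      simp_rw [hRB, Finset.sum_add_distrib]
      rw [Finset.sum_comm (s := I) (t := I) (f := fun i j => B i j)]
      ring
    rw [hsum]
    have hbound : ∀ j ∈ I, ∑ i ∈ I, B i j ≤ norm1 B := by
      intro j _
      calc ∑ i ∈ I, B i j ≤ ∑ i ∈ I, |B i j| :=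
            Finset.sum_le_sum fun i _ => le_abs_self _
        _ ≤ ∑ i, |B i j| :=
            Finset.sum_le_sum_of_subset_of_nonneg (Finset.subset_univ I)
              (fun i _ _ => abs_nonneg _)
        _ ≤ norm1 B := hcol j
    have := Finset.sum_le_sum hbound
    rw [Finset.sum_const, nsmul_eq_mul] at this
    nlinarith [this, hB0, hcard]
  · have h2 : norm1 R ≤ norm1 B + normInf B := by
      apply ciSup_le
      intro j
      calc ∑ i, |R i j| = ∑ i, (B i j + B j i) := by
            simp_rw [abs_of_nonneg (hR _ j), hRB]
        _ = ∑ i, B i j + ∑ i, B j i := Finset.sum_add_distrib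
        _ ≤ ∑ i, |B i j| + ∑ i, |B j i| :=
            add_le_add (Finset.sum_le_sum fun i _ => le_abs_self _)
              (Finset.sum_le_sum fun i _ => le_abs_self _)
        _ ≤ norm1 B + normInf B := add_le_add (hcol j) (hrow j)
    linarith
end
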